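/- arXiv:2105.11406 — 2 statements merged into one kernel-verified Lean document; each statement's English description precedes it below -/
import Mathlib

section
/- Consider a network without self-loops: B : Fin n → Fin n → ℝ symmetric with entries in {0,1} and B j j = 0 for all j. Suppose every node's degree exceeds 3n/4 − 1, i.e. ∑_{k=1}^{n} B j k > 3n/4 − 1 for every j. Then every stable equilibrium θ (normalized so that ∑_j sin(θ_j) = 0 and ∑_j cos(θ_j) ≥ 0) is the all-in-phase state: for all j, k there is an integer m with θ_j − θ_k = 2πm. -/
set_option maxHeartbeats 1000000

open Real Finset

lemma kuramoto_aux_E_lower {E σ q n : ℝ} (hE : 0 ≤ E) (hq : 0 ≤ q) (hσ : 0 ≤ σ)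
    (hσn : σ ≤ n / 4) (hn : 0 < n) (h : E ^ 2 + q ≤ 2 * σ * E) :
    2 * q / n + 8 * q ^ 2 / n ^ 3 ≤ E := by
  have h1 : q ≤ n / 2 * E - E ^ 2 := by nlinarith
  have h2 : 2 * q ≤ n * E := by nlinarith
  have h3 : 2 * q * n ^ 2 + 8 * q ^ 2 ≤ E * n ^ 3 := by
    nlinarith [sq_nonneg (n * E - 2 * q), mul_nonneg (mul_nonneg hq hq) hn.le,
      mul_nonneg hq hE]
  have hn3 : (0:ℝ) < n ^ 3 := by positivity
  rw [div_add_div _ _ (by positivity : (n:ℝ) ≠ 0) (by positivity : (n:ℝ)^3 ≠ 0)]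
  rw [div_le_iff₀ (by positivity)]
  ring_nf
  ring_nf at h3
  nlinarith [h3]

lemma kuramoto_aux_final {P S2 T Q2 n : ℝ} (hn : 0 < n) (hP0 : 0 ≤ P) (hP : P ≤ n / 4)
    (hS2 : 0 ≤ S2)
    (hT : 2 * P ^ 2 * S2 / n + 8 * P ^ 4 * S2 ^ 2 / n ^ 4 ≤ T)
    (hQ : (n - 2 * S2) ^ 2 ≤ Q2) :
    2 * P ^ 2 ≤ Q2 + 2 * T := by
  have hn4 : (0:ℝ) < n ^ 4 := by positivity
  have hT' : 2 * P ^ 2 * S2 * n ^ 3 + 8 * P ^ 4 * S2 ^ 2 ≤ T * n ^ 4 := by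
    have := mul_le_mul_of_nonneg_right hT hn4.le
    calc 2 * P ^ 2 * S2 * n ^ 3 + 8 * P ^ 4 * S2 ^ 2
        = (2 * P ^ 2 * S2 / n + 8 * P ^ 4 * S2 ^ 2 / n ^ 4) * n ^ 4 := by
          field_simp
      _ ≤ T * n ^ 4 := this
  set u : ℝ := n - 2 * S2 with hu
  have h38 : 8 * P ^ 2 ≤ 3 * n ^ 2 := by nlinarith
  have expand : (n ^ 4 + 4 * P ^ 4) * (n ^ 4 * u ^ 2 - 2 * P ^ 2 * n ^ 3 * u
      + 4 * P ^ 4 * (n - u) ^ 2)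
      = ((n ^ 4 + 4 * P ^ 4) * u - (P ^ 2 * n ^ 3 + 4 * P ^ 4 * n)) ^ 2
        + P ^ 4 * n ^ 4 * (3 * n ^ 2 - 8 * P ^ 2) := by ring
  have hrem : (0:ℝ) ≤ P ^ 4 * n ^ 4 * (3 * n ^ 2 - 8 * P ^ 2) := by
    apply mul_nonneg (by positivity); linarith
  have hprodpos : (0:ℝ) < n ^ 4 + 4 * P ^ 4 := by positivity
  have key : 0 ≤ n ^ 4 * u ^ 2 - 2 * P ^ 2 * n ^ 3 * u + 4 * P ^ 4 * (n - u) ^ 2 := by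
    have h0 : 0 ≤ (n ^ 4 + 4 * P ^ 4) * (n ^ 4 * u ^ 2 - 2 * P ^ 2 * n ^ 3 * u
        + 4 * P ^ 4 * (n - u) ^ 2) := by
      rw [expand]; positivity
    exact nonneg_of_mul_nonneg_right h0 hprodpos
  have hS2u : S2 = (n - u) / 2 := by rw [hu]; ring
  rw [hS2u] at hT'
  have hQ' : u ^ 2 * n ^ 4 ≤ Q2 * n ^ 4 := by nlinarith
  have goal' : (2 * P ^ 2) * n ^ 4 ≤ (Q2 + 2 * T) * n ^ 4 := by
    ring_nf at key hQ' hT' ⊢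
    linarith [key, hQ', hT']
  exact le_of_mul_le_mul_right goal' hn4


lemma kuramoto_no_bad_node (n : ℕ) (hn : 1 ≤ n) (B : Fin n → Fin n → ℝ) (θ : Fin n → ℝ)
    (hsym : ∀ j k, B j k = B k j)
    (h01 : ∀ j k, B j k = 0 ∨ B j k = 1)
    (hdiag : ∀ j, B j j = 0)
    (hdeg : ∀ j, 3 * (n : ℝ) / 4 - 1 < ∑ k : Fin n, B j k)
    (heq : ∀ j, ∑ k : Fin n, B j k * Real.sin (θ k - θ j) = 0)
    (hstab : ∀ v : Fin n → ℝ,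
      0 ≤ ∑ j : Fin n, ∑ k : Fin n,
            B j k * Real.cos (θ k - θ j) * (v j - v k) ^ 2)
    (hsin0 : ∑ j : Fin n, Real.sin (θ j) = 0)
    (hcos0 : 0 ≤ ∑ j : Fin n, Real.cos (θ j))
    (a : Fin n) (ha : Real.cos (θ a) ≤ 0) : False := by
  classical
  have hnR : (0:ℝ) < n := by exact_mod_cast hn
  obtain ⟨x, hxdef⟩ : ∃ x : Fin n → ℝ, x = fun j => Real.cos (θ j) := ⟨_, rfl⟩
  obtain ⟨s, hsdef⟩ : ∃ s : Fin n → ℝ, s = fun j => Real.sin (θ j) := ⟨_, rfl⟩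
  have hx : ∀ j, x j = Real.cos (θ j) := fun j => by rw [hxdef]
  have hs : ∀ j, s j = Real.sin (θ j) := fun j => by rw [hsdef]
  have hpyth : ∀ j, x j ^ 2 + s j ^ 2 = 1 := by
    intro j; rw [hx, hs]; rw [add_comm]; exact Real.sin_sq_add_cos_sq (θ j)
  have hx1 : ∀ j, x j ≤ 1 := fun j => by rw [hx]; exact Real.cos_le_one _
  have hcs : ∀ j k : Fin n, Real.cos (θ k - θ j) = x k * x j + s k * s j := by
    intro j k; rw [Real.cos_sub, hx, hx, hs, hs]
  have hss : ∀ j k : Fin n, Real.sin (θ k - θ j) = s k * x j - x k * s j := by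
    intro j k; rw [Real.sin_sub, hx, hx, hs, hs]
  have hcbound : ∀ j k : Fin n, -1 ≤ x k * x j + s k * s j ∧ x k * x j + s k * s j ≤ 1 := by
    intro j k
    constructor
    · rw [← hcs j k]; exact Real.neg_one_le_cos _
    · rw [← hcs j k]; exact Real.cos_le_one _
  have heq' : ∀ j, ∑ k, B j k * (s k * x j - x k * s j) = 0 := by
    intro j
    rw [← heq j]
    exact Finset.sum_congr rfl fun k _ => by rw [hss j k]
  have hstab' : ∀ v : Fin n → ℝ,
      0 ≤ ∑ j, ∑ k, B j k * (x k * x j + s k * s j) * (v j - v k) ^ 2 := by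
    intro v
    have := hstab v
    calc (0:ℝ) ≤ ∑ j, ∑ k, B j k * Real.cos (θ k - θ j) * (v j - v k) ^ 2 := this
      _ = _ := by
        exact Finset.sum_congr rfl fun j _ => Finset.sum_congr rfl fun k _ => by
          rw [hcs j k]
  -- sums of x and s
  have hsums : ∑ j, s j = 0 := by rw [← hsin0]; exact Finset.sum_congr rfl fun j _ => hs j
  obtain ⟨P, hP⟩ : ∃ P : ℝ, P = ∑ j, x j := ⟨_, rfl⟩
  have hP0 : 0 ≤ P := by
    rw [hP]
    have hrw : ∑ j, x j = ∑ j, Real.cos (θ j) := Finset.sum_congr rfl fun j _ => hx j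
    rw [hrw]; exact hcos0
  -- the complement matrix
  obtain ⟨M, hM⟩ : ∃ M : Fin n → Fin n → ℝ,
      M = fun j k => if j = k then (0:ℝ) else 1 - B j k := ⟨_, rfl⟩
  have hM0 : ∀ j k, 0 ≤ M j k := by
    intro j k; rw [hM]
    by_cases h : j = k
    · simp [h]
    · simp only [if_neg h]; rcases h01 j k with h1 | h1 <;> rw [h1] <;> norm_num
  have hM1 : ∀ j k, M j k ≤ 1 := by
    intro j k; rw [hM]
    by_cases h : j = k
    · simp [h]
    · simp only [if_neg h]; rcases h01 j k with h1 | h1 <;> rw [h1] <;> norm_num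
  have hMsq : ∀ j k, M j k ^ 2 = M j k := by
    intro j k; rw [hM]
    by_cases h : j = k
    · simp [h]
    · simp only [if_neg h]; rcases h01 j k with h1 | h1 <;> rw [h1] <;> norm_num
  have hBIM : ∀ j k, B j k + (if j = k then (1:ℝ) else 0) + M j k = 1 := by
    intro j k; rw [hM]
    by_cases h : j = k
    · simp only [if_pos h]; rw [h, hdiag k]; ring
    · simp only [if_neg h]; ring
  -- split lemma for arbitrary F
  have hsplit1 : ∀ (j : Fin n) (f : Fin n → ℝ),
      ∑ k, f k = (∑ k, B j k * f k) + f j + ∑ k, M j k * f k := by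
    intro j f
    have h2 : ∀ k, f k = B j k * f k + (if j = k then f k else 0) + M j k * f k := by
      intro k
      have hb := hBIM j k
      by_cases h : j = k
      · rw [if_pos h] at hb; simp only [if_pos h]; linear_combination (-(f k)) * hb
      · rw [if_neg h] at hb; simp only [if_neg h]; linear_combination (-(f k)) * hb
    calc ∑ k, f k = ∑ k, (B j k * f k + (if j = k then f k else 0) + M j k * f k) :=
          Finset.sum_congr rfl fun k _ => h2 k
      _ = (∑ k, B j k * f k) + (∑ k, if j = k then f k else 0) + ∑ k, M j k * f k := by
          rw [Finset.sum_add_distrib, Finset.sum_add_distrib]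
      _ = (∑ k, B j k * f k) + f j + ∑ k, M j k * f k := by
          rw [Finset.sum_ite_eq univ j f]; simp
  have hsplit : ∀ F : Fin n → Fin n → ℝ,
      ∑ j, ∑ k, F j k
        = (∑ j, ∑ k, B j k * F j k) + (∑ j, F j j) + ∑ j, ∑ k, M j k * F j k := by
    intro F
    calc ∑ j, ∑ k, F j k
        = ∑ j, ((∑ k, B j k * F j k) + F j j + ∑ k, M j k * F j k) :=
          Finset.sum_congr rfl fun j _ => hsplit1 j (F j)
      _ = _ := by rw [Finset.sum_add_distrib, Finset.sum_add_distrib]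
  -- row sums of M
  obtain ⟨σ, hσdef⟩ : ∃ σ : Fin n → ℝ, σ = fun j => ∑ k, M j k := ⟨_, rfl⟩
  have hσ : ∀ j, σ j = ∑ k, M j k := fun j => by rw [hσdef]
  have hσ0 : ∀ j, 0 ≤ σ j := fun j => by
    rw [hσ]; exact Finset.sum_nonneg fun k _ => hM0 j k
  have hσb : ∀ j, σ j + (∑ k, B j k) + 1 = n := by
    intro j
    have h1 := hsplit1 j (fun _ => (1:ℝ))
    simp only [mul_one] at h1
    have h2 : ∑ _k : Fin n, (1:ℝ) = n := by
      rw [Finset.sum_const, Finset.card_univ]; simp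
    rw [h2] at h1
    rw [hσ]; linarith
  have hσn4 : ∀ j, σ j ≤ (n:ℝ) / 4 := by
    intro j
    have h1 := hσb j
    have h2 := hdeg j
    linarith
  -- per-node first moments of the complement neighborhood
  obtain ⟨D1, hD1def⟩ : ∃ D : Fin n → ℝ, D = fun j => ∑ k, M j k * x k := ⟨_, rfl⟩
  obtain ⟨D2, hD2def⟩ : ∃ D : Fin n → ℝ, D = fun j => ∑ k, M j k * s k := ⟨_, rfl⟩
  have hD1 : ∀ j, D1 j = ∑ k, M j k * x k := fun j => by rw [hD1def]
  have hD2 : ∀ j, D2 j = ∑ k, M j k * s k := fun j => by rw [hD2def]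
  obtain ⟨E, hEdef⟩ : ∃ E : Fin n → ℝ,
      E = fun j => ∑ k, M j k * (1 + (x k * x j + s k * s j)) := ⟨_, rfl⟩
  have hE : ∀ j, E j = ∑ k, M j k * (1 + (x k * x j + s k * s j)) := fun j => by rw [hEdef]
  have hE0 : ∀ j, 0 ≤ E j := by
    intro j; rw [hE]
    exact Finset.sum_nonneg fun k _ =>
      mul_nonneg (hM0 j k) (by linarith [(hcbound j k).1])
  have hEexp : ∀ j, E j = σ j + (x j * D1 j + s j * D2 j) := by
    intro j
    have h1 : E j = (∑ k, M j k) + ((∑ k, M j k * x k) * x j + (∑ k, M j k * s k) * s j) := by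
      rw [hE]
      rw [Finset.sum_congr rfl fun k (_ : k ∈ univ) =>
        (by ring : M j k * (1 + (x k * x j + s k * s j))
          = M j k + (M j k * x k * x j + M j k * s k * s j))]
      rw [Finset.sum_add_distrib, Finset.sum_add_distrib, ← Finset.sum_mul, ← Finset.sum_mul]
    rw [h1, ← hσ, ← hD1, ← hD2]
    ring
  -- equilibrium in complement form
  have hMeq : ∀ j, x j * D2 j - s j * D1 j = -(P * s j) := by
    intro j
    have hall : ∑ k, (s k * x j - x k * s j) = -(P * s j) := by
      have h1 : ∑ k, (s k * x j - x k * s j)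
          = (∑ k, s k) * x j - (∑ k, x k) * s j := by
        rw [Finset.sum_sub_distrib, ← Finset.sum_mul, ← Finset.sum_mul]
      rw [h1, hsums, ← hP]; ring
    have hsp := hsplit1 j (fun k => s k * x j - x k * s j)
    rw [heq' j] at hsp
    have hdiagterm : s j * x j - x j * s j = 0 := by ring
    rw [hdiagterm] at hsp
    have hMpart : ∑ k, M j k * (s k * x j - x k * s j)
        = (∑ k, M j k * s k) * x j - (∑ k, M j k * x k) * s j := by
      rw [Finset.sum_congr rfl fun k (_ : k ∈ univ) =>
        (by ring : M j k * (s k * x j - x k * s j)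
          = M j k * s k * x j - M j k * x k * s j)]
      rw [Finset.sum_sub_distrib, ← Finset.sum_mul, ← Finset.sum_mul]
    rw [hMpart] at hsp
    rw [hall] at hsp
    rw [hD1, hD2]
    linarith
  -- per-node Cauchy-Schwarz bound
  have hCS : ∀ j, (E j)^2 + (P * s j)^2 ≤ 2 * σ j * E j := by
    intro j
    have hPs : P * s j = s j * D1 j - x j * D2 j := by linarith [hMeq j]
    have hkey : (D1 j + σ j * x j)^2 + (D2 j + σ j * s j)^2 = (E j)^2 + (P * s j)^2 := by
      rw [hEexp j, hPs]
      linear_combination (σ j^2 - D1 j^2 - D2 j^2) * (hpyth j)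
    have hrw1 : D1 j + σ j * x j = ∑ k, M j k * (M j k * (x k + x j)) := by
      have h1 : ∀ k, M j k * (M j k * (x k + x j)) = M j k * x k + M j k * x j := by
        intro k
        have hsq := hMsq j k
        linear_combination (x k + x j) * hsq
      rw [Finset.sum_congr rfl fun k (_ : k ∈ univ) => h1 k]
      rw [Finset.sum_add_distrib, hD1, hσ, ← Finset.sum_mul]
    have hrw2 : D2 j + σ j * s j = ∑ k, M j k * (M j k * (s k + s j)) := by
      have h1 : ∀ k, M j k * (M j k * (s k + s j)) = M j k * s k + M j k * s j := by
        intro k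
        have hsq := hMsq j k
        linear_combination (s k + s j) * hsq
      rw [Finset.sum_congr rfl fun k (_ : k ∈ univ) => h1 k]
      rw [Finset.sum_add_distrib, hD2, hσ, ← Finset.sum_mul]
    have hMsqsum : ∑ k, (M j k)^2 = σ j := by
      rw [hσ]; exact Finset.sum_congr rfl fun k _ => hMsq j k
    have hcs1 : (D1 j + σ j * x j)^2 ≤ σ j * ∑ k, M j k * (x k + x j)^2 := by
      rw [hrw1]
      have hC := Finset.sum_mul_sq_le_sq_mul_sq univ (fun k => M j k)
        (fun k => M j k * (x k + x j))
      have hg : ∑ k, (M j k * (x k + x j))^2 = ∑ k, M j k * (x k + x j)^2 := by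
        refine Finset.sum_congr rfl fun k _ => ?_
        have hsq := hMsq j k
        linear_combination ((x k + x j)^2) * hsq
      rw [hMsqsum, hg] at hC
      exact hC
    have hcs2 : (D2 j + σ j * s j)^2 ≤ σ j * ∑ k, M j k * (s k + s j)^2 := by
      rw [hrw2]
      have hC := Finset.sum_mul_sq_le_sq_mul_sq univ (fun k => M j k)
        (fun k => M j k * (s k + s j))
      have hg : ∑ k, (M j k * (s k + s j))^2 = ∑ k, M j k * (s k + s j)^2 := by
        refine Finset.sum_congr rfl fun k _ => ?_
        have hsq := hMsq j k
        linear_combination ((s k + s j)^2) * hsq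
      rw [hMsqsum, hg] at hC
      exact hC
    have hsum2 : (∑ k, M j k * (x k + x j)^2) + (∑ k, M j k * (s k + s j)^2) = 2 * E j := by
      rw [← Finset.sum_add_distrib]
      have h1 : ∀ k, M j k * (x k + x j)^2 + M j k * (s k + s j)^2
          = 2 * (M j k * (1 + (x k * x j + s k * s j))) := by
        intro k
        linear_combination (M j k) * (hpyth k) + (M j k) * (hpyth j)
      rw [Finset.sum_congr rfl fun k (_ : k ∈ univ) => h1 k]
      rw [← Finset.mul_sum, ← hE]
    have hfin : σ j * (∑ k, M j k * (x k + x j)^2) + σ j * (∑ k, M j k * (s k + s j)^2)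
        = 2 * σ j * E j := by
      rw [← mul_add, hsum2]; ring
    nlinarith [hcs1, hcs2, hkey, hfin]
  -- per-node fourth-order lower bound on E
  have hElower : ∀ j, 2*(P*s j)^2/(n:ℝ) + 8*((P*s j)^2)^2/(n:ℝ)^3 ≤ E j := by
    intro j
    exact kuramoto_aux_E_lower (hE0 j) (sq_nonneg _) (hσ0 j) (hσn4 j) hnR (by linarith [hCS j])
  -- summed quantities
  obtain ⟨S2, hS2⟩ : ∃ S2 : ℝ, S2 = ∑ j, (s j)^2 := ⟨_, rfl⟩
  obtain ⟨S4, hS4⟩ : ∃ S4 : ℝ, S4 = ∑ j, ((s j)^2)^2 := ⟨_, rfl⟩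
  obtain ⟨T, hT⟩ : ∃ T : ℝ, T = ∑ j, E j := ⟨_, rfl⟩
  have hS20 : 0 ≤ S2 := by rw [hS2]; exact Finset.sum_nonneg fun j _ => sq_nonneg _
  have hTsum : 2*P^2*S2/(n:ℝ) + 8*P^4*S4/(n:ℝ)^3 ≤ T := by
    have h1 : ∀ j, 2*(P*s j)^2/(n:ℝ) + 8*((P*s j)^2)^2/(n:ℝ)^3
        = (2*P^2/(n:ℝ))*((s j)^2) + (8*P^4/(n:ℝ)^3)*(((s j)^2)^2) := by
      intro j; ring
    have h2 : ∑ j, (2*(P*s j)^2/(n:ℝ) + 8*((P*s j)^2)^2/(n:ℝ)^3)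
        = (2*P^2/(n:ℝ))*S2 + (8*P^4/(n:ℝ)^3)*S4 := by
      rw [Finset.sum_congr rfl fun j (_ : j ∈ univ) => h1 j]
      rw [Finset.sum_add_distrib, ← Finset.mul_sum, ← Finset.mul_sum, ← hS2, ← hS4]
    have h3 : ∑ j, (2*(P*s j)^2/(n:ℝ) + 8*((P*s j)^2)^2/(n:ℝ)^3) ≤ ∑ j, E j :=
      Finset.sum_le_sum fun j _ => hElower j
    rw [h2] at h3
    rw [hT]
    calc 2*P^2*S2/(n:ℝ) + 8*P^4*S4/(n:ℝ)^3
        = (2*P^2/(n:ℝ))*S2 + (8*P^4/(n:ℝ)^3)*S4 := by ring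
      _ ≤ ∑ j, E j := h3
  have hS4ge : S2^2 ≤ (n:ℝ) * S4 := by
    have hC := sq_sum_le_card_mul_sum_sq (s := (univ : Finset (Fin n)))
      (f := fun j => (s j)^2)
    rw [← hS2, ← hS4] at hC
    simpa using hC
  have hTfinal : 2*P^2*S2/(n:ℝ) + 8*P^4*S2^2/(n:ℝ)^4 ≤ T := by
    have h48 : 8*P^4*S2^2/(n:ℝ)^4 ≤ 8*P^4*S4/(n:ℝ)^3 := by
      rw [div_le_div_iff₀ (by positivity) (by positivity)]
      have h0 : (0:ℝ) ≤ 8*P^4*(n:ℝ)^3 := by positivity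
      calc 8*P^4*S2^2*(n:ℝ)^3 = (8*P^4*(n:ℝ)^3) * S2^2 := by ring
        _ ≤ (8*P^4*(n:ℝ)^3) * ((n:ℝ)*S4) := mul_le_mul_of_nonneg_left hS4ge h0
        _ = 8*P^4*S4*(n:ℝ)^4 := by ring
    linarith [hTsum, h48]
  -- second harmonics
  obtain ⟨c2, hc2def⟩ : ∃ c2 : Fin n → ℝ, c2 = fun j => 1 - 2*(s j)^2 := ⟨_, rfl⟩
  obtain ⟨s2, hs2def⟩ : ∃ s2 : Fin n → ℝ, s2 = fun j => 2*(s j)*(x j) := ⟨_, rfl⟩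
  have hc2 : ∀ j, c2 j = 1 - 2*(s j)^2 := fun j => by rw [hc2def]
  have hs2 : ∀ j, s2 j = 2*(s j)*(x j) := fun j => by rw [hs2def]
  have hpyth2 : ∀ j, (c2 j)^2 + (s2 j)^2 = 1 := by
    intro j
    rw [hc2, hs2]
    linear_combination (4*(s j)^2) * (hpyth j)
  obtain ⟨Q2, hQ2⟩ : ∃ Q2 : ℝ, Q2 = (∑ j, c2 j)^2 + (∑ j, s2 j)^2 := ⟨_, rfl⟩
  have hc2sum : ∑ j, c2 j = (n:ℝ) - 2*S2 := by
    have h1 : ∀ j, c2 j = 1 - 2*(s j)^2 := hc2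
    rw [Finset.sum_congr rfl fun j (_ : j ∈ univ) => h1 j, Finset.sum_sub_distrib]
    rw [← Finset.mul_sum, ← hS2, Finset.sum_const, Finset.card_univ]
    simp
  have hQ2ge : ((n:ℝ) - 2*S2)^2 ≤ Q2 := by
    rw [hQ2, ← hc2sum]
    exact le_add_of_nonneg_right (sq_nonneg _)
  -- stability at the indicator of the bad node
  have hrstab : 0 ≤ ∑ k, B a k * (x k * x a + s k * s a) := by
    have hv := hstab' (fun i => if i = a then (1:ℝ) else 0)
    obtain ⟨A, hA⟩ : ∃ A : Fin n → ℝ,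
        A = fun k => if k = a then (0:ℝ) else B a k * (x k * x a + s k * s a) := ⟨_, rfl⟩
    obtain ⟨C, hC⟩ : ∃ C : Fin n → ℝ,
        C = fun j => if j = a then (0:ℝ) else B j a * (x a * x j + s a * s j) := ⟨_, rfl⟩
    have hpt : ∀ j k : Fin n, B j k * (x k * x j + s k * s j) *
        ((if j = a then (1:ℝ) else 0) - (if k = a then (1:ℝ) else 0))^2
        = (if j = a then A k else 0) + (if k = a then C j else 0) := by
      intro j k
      by_cases hj : j = a <;> by_cases hk : k = a
      · subst hj; subst hk; simp [hA, hC, hdiag]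
      · subst hj; simp [hA, hC, hk]
      · subst hk; simp [hA, hC, hj]
      · simp [hA, hC, hj, hk]
    have hsum : ∑ j, ∑ k, (B j k * (x k * x j + s k * s j) *
        ((if j = a then (1:ℝ) else 0) - (if k = a then (1:ℝ) else 0))^2)
        = (∑ k, A k) + (∑ j, C j) := by
      rw [Finset.sum_congr rfl fun j (_ : j ∈ univ) =>
        Finset.sum_congr rfl fun k (_ : k ∈ univ) => hpt j k]
      rw [Finset.sum_congr rfl fun j (_ : j ∈ univ) =>
        (Finset.sum_add_distrib :
          ∑ k, ((if j = a then A k else 0) + (if k = a then C j else 0)) = _)]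
      rw [Finset.sum_add_distrib]
      congr 1
      · have h1 : ∀ j : Fin n, ∑ k, (if j = a then A k else 0)
            = if j = a then (∑ k, A k) else 0 := by
          intro j; split_ifs <;> simp
        rw [Finset.sum_congr rfl fun j (_ : j ∈ univ) => h1 j]
        rw [Finset.sum_ite_eq' univ a (fun _ => ∑ k, A k)]
        simp
      · have h1 : ∀ j : Fin n, ∑ k, (if k = a then C j else 0) = C j := by
          intro j
          rw [Finset.sum_ite_eq' univ a (fun _ => C j)]
          simp
        exact Finset.sum_congr rfl fun j _ => h1 j
    have hAsum : ∑ k, A k = ∑ k, B a k * (x k * x a + s k * s a) := by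
      refine Finset.sum_congr rfl fun k _ => ?_
      rw [hA]
      by_cases hk : k = a
      · subst hk; simp [hdiag]
      · simp [hk]
    have hCsum : ∑ j, C j = ∑ k, B a k * (x k * x a + s k * s a) := by
      have h1 : ∀ j, C j = B a j * (x j * x a + s j * s a) := by
        intro j
        rw [hC]
        by_cases hj : j = a
        · subst hj; simp [hdiag]
        · simp only [if_neg hj]; rw [hsym j a]; ring
      exact Finset.sum_congr rfl fun j _ => h1 j
    rw [hsum, hAsum, hCsum] at hv
    linarith
  -- alignment of the bad-node row with x a
  have halign : ∑ k, B a k * x k = (∑ k, B a k * (x k * x a + s k * s a)) * x a := by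
    have h1 : ∀ k, B a k * x k = B a k * (x k * x a + s k * s a) * x a
        - s a * (B a k * (s k * x a - x k * s a))
        + (B a k * x k) * (1 - (x a^2 + s a^2)) := by
      intro k; ring
    rw [Finset.sum_congr rfl fun k (_ : k ∈ univ) => h1 k]
    rw [Finset.sum_add_distrib, Finset.sum_sub_distrib, ← Finset.sum_mul, ← Finset.mul_sum,
      ← Finset.sum_mul]
    rw [heq' a, hpyth a]
    simp
  have hxa : x a ≤ 0 := by rw [hx]; exact ha
  have hPn4 : P ≤ (n:ℝ)/4 := by
    have hsp := hsplit1 a x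
    rw [halign] at hsp
    have h2 : (∑ k, B a k * (x k * x a + s k * s a)) * x a + x a ≤ 0 := by
      have : ((∑ k, B a k * (x k * x a + s k * s a)) + 1) * x a ≤ 0 :=
        mul_nonpos_of_nonneg_of_nonpos (by linarith [hrstab]) hxa
      nlinarith [this]
    have h3 : ∑ k, M a k * x k ≤ σ a := by
      rw [hσ]
      refine Finset.sum_le_sum fun k _ => ?_
      calc M a k * x k ≤ M a k * 1 := mul_le_mul_of_nonneg_left (hx1 k) (hM0 a k)
        _ = M a k := by ring
    have h4 : P ≤ σ a := by rw [hP, hsp]; linarith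
    linarith [hσn4 a]
  -- global sums
  obtain ⟨Cb, hCb⟩ : ∃ c : ℝ, c = ∑ j, ∑ k, B j k * (x k * x j + s k * s j) := ⟨_, rfl⟩
  obtain ⟨C2b, hC2b⟩ : ∃ c : ℝ, c = ∑ j, ∑ k, B j k * (x k * x j + s k * s j)^2 := ⟨_, rfl⟩
  obtain ⟨bsum, hbsumdef⟩ : ∃ c : ℝ, c = ∑ j, ∑ k, B j k := ⟨_, rfl⟩
  obtain ⟨Sigb, hSigbdef⟩ : ∃ c : ℝ, c = ∑ j, σ j := ⟨_, rfl⟩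
  obtain ⟨Mc, hMcdef⟩ : ∃ c : ℝ, c = ∑ j, ∑ k, M j k * (x k * x j + s k * s j) := ⟨_, rfl⟩
  obtain ⟨B2, hB2def⟩ : ∃ c : ℝ, c = ∑ j, ∑ k, B j k * (c2 k * c2 j + s2 k * s2 j) := ⟨_, rfl⟩
  obtain ⟨M2, hM2def⟩ : ∃ c : ℝ, c = ∑ j, ∑ k, M j k * (c2 k * c2 j + s2 k * s2 j) := ⟨_, rfl⟩
  -- stability with first harmonics: C2b ≤ Cb
  have hL1 : C2b ≤ Cb := by
    have hvx := hstab' x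
    have hvs := hstab' s
    have hid : ∑ j, ∑ k, (B j k * (x k * x j + s k * s j) * (x j - x k)^2
        + B j k * (x k * x j + s k * s j) * (s j - s k)^2)
        = 2*Cb - 2*C2b := by
      have hpt : ∀ j k : Fin n, B j k * (x k * x j + s k * s j) * (x j - x k)^2
          + B j k * (x k * x j + s k * s j) * (s j - s k)^2
          = 2*(B j k * (x k * x j + s k * s j)) - 2*(B j k * (x k * x j + s k * s j)^2) := by
        intro j k
        linear_combination (B j k * (x k * x j + s k * s j)) * (hpyth j)
          + (B j k * (x k * x j + s k * s j)) * (hpyth k)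
      rw [Finset.sum_congr rfl fun j (_ : j ∈ univ) =>
        Finset.sum_congr rfl fun k (_ : k ∈ univ) => hpt j k]
      rw [Finset.sum_congr rfl fun j (_ : j ∈ univ) =>
        (Finset.sum_sub_distrib _ _ :
          ∑ k, (2*(B j k * (x k * x j + s k * s j)) - 2*(B j k * (x k * x j + s k * s j)^2)) = _)]
      rw [Finset.sum_sub_distrib]
      rw [Finset.sum_congr rfl fun j (_ : j ∈ univ) =>
        (Finset.mul_sum univ (fun k => B j k * (x k * x j + s k * s j)) 2).symm]
      rw [Finset.sum_congr rfl fun j (_ : j ∈ univ) =>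
        (Finset.mul_sum univ (fun k => B j k * (x k * x j + s k * s j)^2) 2).symm]
      rw [← Finset.mul_sum, ← Finset.mul_sum, ← hCb, ← hC2b]
    have hcomb : 0 ≤ 2*Cb - 2*C2b := by
      rw [← hid]
      rw [Finset.sum_congr rfl fun j (_ : j ∈ univ) =>
        (Finset.sum_add_distrib :
          ∑ k, (B j k * (x k * x j + s k * s j) * (x j - x k)^2
            + B j k * (x k * x j + s k * s j) * (s j - s k)^2) = _)]
      rw [Finset.sum_add_distrib]
      exact add_nonneg hvx hvs
    linarith
  -- identity: sum over all pairs of first-harmonic cosines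
  have hPsq : P^2 = Cb + (n:ℝ) + Mc := by
    have hall : ∑ j, ∑ k, (x k * x j + s k * s j) = P^2 := by
      have h1 : ∀ j, ∑ k, (x k * x j + s k * s j) = (∑ k, x k) * x j + (∑ k, s k) * s j := by
        intro j
        rw [Finset.sum_add_distrib, ← Finset.sum_mul, ← Finset.sum_mul]
      rw [Finset.sum_congr rfl fun j (_ : j ∈ univ) => h1 j]
      rw [Finset.sum_add_distrib, ← Finset.mul_sum, ← Finset.mul_sum, hsums, ← hP]
      ring
    have hdiagsum : ∑ j, (x j * x j + s j * s j) = (n:ℝ) := by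
      have h1 : ∀ j, x j * x j + s j * s j = 1 := by
        intro j; linear_combination hpyth j
      rw [Finset.sum_congr rfl fun j (_ : j ∈ univ) => h1 j]
      rw [Finset.sum_const, Finset.card_univ]; simp
    have := hsplit (fun j k => x k * x j + s k * s j)
    rw [hall, hdiagsum, ← hCb, ← hMcdef] at this
    linarith
  -- identity: sum over all pairs of second-harmonic cosines
  have hQ2id : Q2 = B2 + (n:ℝ) + M2 := by
    have hall : ∑ j, ∑ k, (c2 k * c2 j + s2 k * s2 j) = Q2 := by
      have h1 : ∀ j, ∑ k, (c2 k * c2 j + s2 k * s2 j)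
          = (∑ k, c2 k) * c2 j + (∑ k, s2 k) * s2 j := by
        intro j
        rw [Finset.sum_add_distrib, ← Finset.sum_mul, ← Finset.sum_mul]
      rw [Finset.sum_congr rfl fun j (_ : j ∈ univ) => h1 j]
      rw [Finset.sum_add_distrib, ← Finset.mul_sum, ← Finset.mul_sum, hQ2]
      ring
    have hdiagsum : ∑ j, (c2 j * c2 j + s2 j * s2 j) = (n:ℝ) := by
      have h1 : ∀ j, c2 j * c2 j + s2 j * s2 j = 1 := by
        intro j; have := hpyth2 j; nlinarith [this]
      rw [Finset.sum_congr rfl fun j (_ : j ∈ univ) => h1 j]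
      rw [Finset.sum_const, Finset.card_univ]; simp
    have := hsplit (fun j k => c2 k * c2 j + s2 k * s2 j)
    rw [hall, hdiagsum, ← hB2def, ← hM2def] at this
    linarith
  -- half-angle identity: 2*C2b = bsum + B2
  have hC2id : 2*C2b = bsum + B2 := by
    have hpt : ∀ j k : Fin n, 2*(B j k * (x k * x j + s k * s j)^2)
        = B j k + B j k * (c2 k * c2 j + s2 k * s2 j) := by
      intro j k
      rw [hc2, hc2, hs2, hs2]
      linear_combination (2*(B j k)*(x j)^2) * (hpyth k)
        + (2*(B j k)*(1 - (s k)^2)) * (hpyth j)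
    have h1 : ∑ j, ∑ k, (2*(B j k * (x k * x j + s k * s j)^2))
        = ∑ j, ∑ k, (B j k + B j k * (c2 k * c2 j + s2 k * s2 j)) := by
      exact Finset.sum_congr rfl fun j _ => Finset.sum_congr rfl fun k _ => hpt j k
    have h2 : ∑ j, ∑ k, (2*(B j k * (x k * x j + s k * s j)^2)) = 2*C2b := by
      rw [Finset.sum_congr rfl fun j (_ : j ∈ univ) =>
        (Finset.mul_sum univ (fun k => B j k * (x k * x j + s k * s j)^2) 2).symm]
      rw [← Finset.mul_sum, ← hC2b]
    have h3 : ∑ j, ∑ k, (B j k + B j k * (c2 k * c2 j + s2 k * s2 j))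
        = bsum + B2 := by
      rw [Finset.sum_congr rfl fun j (_ : j ∈ univ) =>
        (Finset.sum_add_distrib :
          ∑ k, (B j k + B j k * (c2 k * c2 j + s2 k * s2 j)) = _)]
      rw [Finset.sum_add_distrib, ← hbsumdef, ← hB2def]
    rw [← h2, h1, h3]
  -- complement second-harmonic sum is at most Sigb
  have hM2le : M2 ≤ Sigb := by
    have hpt : ∀ j k : Fin n, M j k * (c2 k * c2 j + s2 k * s2 j) ≤ M j k := by
      intro j k
      have hd : c2 k * c2 j + s2 k * s2 j ≤ 1 := by
        nlinarith [sq_nonneg (c2 k - c2 j), sq_nonneg (s2 k - s2 j), hpyth2 j, hpyth2 k]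
      calc M j k * (c2 k * c2 j + s2 k * s2 j) ≤ M j k * 1 :=
            mul_le_mul_of_nonneg_left hd (hM0 j k)
        _ = M j k := by ring
    have h1 : ∑ j, ∑ k, M j k * (c2 k * c2 j + s2 k * s2 j) ≤ ∑ j, ∑ k, M j k :=
      Finset.sum_le_sum fun j _ => Finset.sum_le_sum fun k _ => hpt j k
    have h2 : ∑ j, ∑ k, M j k = Sigb := by
      rw [hSigbdef]
      exact Finset.sum_congr rfl fun j _ => (hσ j).symm
    rw [← hM2def, h2] at h1
    exact h1
  -- T = Sigb + Mc
  have hMcT : T = Sigb + Mc := by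
    have h1 : ∀ j, E j = σ j + ∑ k, M j k * (x k * x j + s k * s j) := by
      intro j
      rw [hE, hσ]
      rw [← Finset.sum_add_distrib]
      exact Finset.sum_congr rfl fun k _ => by ring
    rw [hT, Finset.sum_congr rfl fun j (_ : j ∈ univ) => h1 j]
    rw [Finset.sum_add_distrib, ← hSigbdef, ← hMcdef]
  -- Sigb = n^2 - n - bsum
  have hSigbval : Sigb = (n:ℝ)^2 - (n:ℝ) - bsum := by
    have h3 : ∑ j : Fin n, (σ j + (∑ k, B j k) + 1) = ∑ j : Fin n, (n:ℝ) :=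
      Finset.sum_congr rfl fun j _ => hσb j
    have h2 : ∑ j : Fin n, (σ j + (∑ k, B j k) + 1) = Sigb + bsum + (n:ℝ) := by
      rw [Finset.sum_add_distrib, Finset.sum_add_distrib, ← hSigbdef, ← hbsumdef]
      congr 1
      rw [Finset.sum_const, Finset.card_univ, Fintype.card_fin, nsmul_eq_mul, mul_one]
    have h4 : ∑ j : Fin n, (n:ℝ) = (n:ℝ)^2 := by
      rw [Finset.sum_const, Finset.card_univ, Fintype.card_fin, nsmul_eq_mul]
      ring
    rw [h2, h4] at h3
    linarith
  -- degree lower bound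
  have hbsumlb : 3*(n:ℝ)^2/4 - (n:ℝ) < bsum := by
    have hne : (Finset.univ : Finset (Fin n)).Nonempty :=
      Finset.univ_nonempty_iff.mpr (Fin.pos_iff_nonempty.mp hn)
    have h1 : ∑ _j : Fin n, (3*(n:ℝ)/4 - 1) < ∑ j, ∑ k, B j k :=
      Finset.sum_lt_sum_of_nonempty hne fun j _ => hdeg j
    have h2 : ∑ _j : Fin n, (3*(n:ℝ)/4 - 1) = 3*(n:ℝ)^2/4 - (n:ℝ) := by
      rw [Finset.sum_const, Finset.card_univ, Fintype.card_fin, nsmul_eq_mul]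
      ring
    rw [h2, ← hbsumdef] at h1
    exact h1
  -- the closing inequality
  have hfinal := kuramoto_aux_final hnR hP0 hPn4 hS20 hTfinal hQ2ge
  linarith [hL1, hPsq, hQ2id, hC2id, hM2le, hMcT, hSigbval, hbsumlb, hfinal]


lemma kuramoto_sync_of_all_cos_pos (n : ℕ) (hn : 1 ≤ n) (B : Fin n → Fin n → ℝ) (θ : Fin n → ℝ)
    (hsym : ∀ j k, B j k = B k j)
    (h01 : ∀ j k, B j k = 0 ∨ B j k = 1)
    (hdiag : ∀ j, B j j = 0)
    (hdeg : ∀ j, 3 * (n : ℝ) / 4 - 1 < ∑ k : Fin n, B j k)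
    (heq : ∀ j, ∑ k : Fin n, B j k * Real.sin (θ k - θ j) = 0)
    (hpos : ∀ j, 0 < Real.cos (θ j)) :
    ∀ j k : Fin n, ∃ m : ℤ, θ j - θ k = 2 * Real.pi * m := by
  classical
  have hπ := Real.pi_pos
  have h2π : (0:ℝ) < 2 * π := by positivity
  have hB0 : ∀ j k, 0 ≤ B j k := by
    intro j k; rcases h01 j k with h | h <;> simp [h]
  have hB1 : ∀ j k, B j k ≤ 1 := by
    intro j k; rcases h01 j k with h | h <;> simp [h]
  obtain ⟨m, hm⟩ : ∃ m : Fin n → ℤ, m = fun j => round (θ j / (2 * π)) := ⟨_, rfl⟩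
  obtain ⟨φ, hφ⟩ : ∃ φ : Fin n → ℝ, φ = fun j => θ j - m j * (2 * π) := ⟨_, rfl⟩
  have hθφ : ∀ j, θ j = φ j + m j * (2 * π) := by intro j; simp [hφ]
  have hφcos : ∀ j, Real.cos (φ j) = Real.cos (θ j) := by
    intro j; simp only [hφ]; exact Real.cos_sub_int_mul_two_pi _ _
  have hsin_diff : ∀ j k : Fin n, Real.sin (θ k - θ j) = Real.sin (φ k - φ j) := by
    intro j k
    have h : θ k - θ j = φ k - φ j + (↑(m k - m j) : ℝ) * (2 * π) := by
      rw [hθφ k, hθφ j]; push_cast; ring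
    rw [h, Real.sin_add_int_mul_two_pi]
  have hφbound : ∀ j, |φ j| ≤ π := by
    intro j
    have h1 : |θ j / (2 * π) - round (θ j / (2 * π))| ≤ 1 / 2 := abs_sub_round _
    have hrepr : φ j = (θ j / (2 * π) - m j) * (2 * π) := by
      simp only [hφ]
      rw [sub_mul, div_mul_cancel₀ _ (ne_of_gt h2π)]
    rw [hrepr, abs_mul, abs_of_pos h2π]
    calc |θ j / (2 * π) - ↑(m j)| * (2 * π) ≤ 1 / 2 * (2 * π) := by
          apply mul_le_mul_of_nonneg_right _ h2π.le
          simpa [hm] using h1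
      _ = π := by ring
  have hφhalf : ∀ j, |φ j| < π / 2 := by
    intro j
    by_contra hcon
    push_neg at hcon
    have h1 : Real.cos |φ j| ≤ 0 := by
      apply Real.cos_nonpos_of_pi_div_two_le_of_le hcon
      have := hφbound j
      linarith
    rw [Real.cos_abs, hφcos j] at h1
    exact absurd (hpos j) (by linarith)
  have hne : (Finset.univ : Finset (Fin n)).Nonempty := by
    exact Finset.univ_nonempty_iff.mpr (Fin.pos_iff_nonempty.mp hn)
  obtain ⟨j0, -, hj0⟩ := Finset.exists_max_image Finset.univ φ hne
  have hclose : ∀ p, φ p = φ j0 → ∀ k, B p k ≠ 0 → φ k = φ j0 := by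
    intro p hp k hBk
    have hsum := heq p
    have hterm : ∀ i ∈ Finset.univ, B p i * Real.sin (θ i - θ p) ≤ 0 := by
      intro i _
      apply mul_nonpos_of_nonneg_of_nonpos (hB0 p i)
      rw [hsin_diff p i]
      have h1 : φ i - φ p ≤ 0 := by
        have := hj0 i (Finset.mem_univ i); rw [hp]; linarith
      obtain ⟨ha1, ha2⟩ := abs_lt.mp (hφhalf i)
      obtain ⟨hb1, hb2⟩ := abs_lt.mp (hφhalf p)
      have h2 : -π < φ i - φ p := by linarith
      have h3 := Real.sin_nonneg_of_nonneg_of_le_pi (x := -(φ i - φ p)) (by linarith) (by linarith)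
      rw [Real.sin_neg] at h3; linarith
    have hzero := (Finset.sum_eq_zero_iff_of_nonpos hterm).mp hsum k (Finset.mem_univ k)
    have hsinz : Real.sin (φ k - φ p) = 0 := by
      rcases mul_eq_zero.mp hzero with h | h
      · exact absurd h hBk
      · rw [← hsin_diff p k]; exact h
    by_contra hne'
    have hle : φ k ≤ φ p := by rw [hp]; exact hj0 k (Finset.mem_univ k)
    have hltne : φ k ≠ φ p := by rw [hp]; exact hne'
    have h1 : φ k - φ p < 0 := sub_neg.mpr (lt_of_le_of_ne hle hltne)
    obtain ⟨ha1, ha2⟩ := abs_lt.mp (hφhalf k)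
    obtain ⟨hb1, hb2⟩ := abs_lt.mp (hφhalf p)
    have h2 : -π < φ k - φ p := by linarith
    have h3 := Real.sin_pos_of_pos_of_lt_pi (x := -(φ k - φ p)) (by linarith) (by linarith)
    rw [Real.sin_neg] at h3
    linarith [hsinz ▸ h3]
  by_cases hall : ∀ k, φ k = φ j0
  · intro j k
    refine ⟨m j - m k, ?_⟩
    have h1 : θ j - θ k = φ j - φ k + (↑(m j - m k) : ℝ) * (2 * π) := by
      rw [hθφ j, hθφ k]; push_cast; ring
    rw [h1, hall j, hall k]
    push_cast; ring
  · exfalso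
    push_neg at hall
    obtain ⟨w, hw⟩ := hall
    obtain ⟨G, hG⟩ : ∃ G : Finset (Fin n), G = Finset.univ.filter (fun k => φ k = φ j0) :=
      ⟨_, rfl⟩
    have hGmem : ∀ p, p ∈ G ↔ φ p = φ j0 := by intro p; simp [hG]
    have hj0G : j0 ∈ G := (hGmem j0).mpr rfl
    have hwG : w ∉ G := fun h => hw ((hGmem w).mp h)
    have hBwG : ∀ p ∈ G, B w p = 0 := by
      intro p hp
      by_contra hB
      have hB' : B p w ≠ 0 := by rw [hsym p w]; exact hB
      exact hw (hclose p ((hGmem p).mp hp) w hB')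
    have hGcard_le : (G.card : ℝ) ≤ (n : ℝ) := by
      have := Finset.card_le_univ G
      simpa using (Nat.cast_le (α := ℝ)).mpr this
    have hGcard_pos : 1 ≤ G.card := Finset.card_pos.mpr ⟨j0, hj0G⟩
    -- degree bound at w
    have hw_bound : ∑ k, B w k ≤ (n : ℝ) - (G.card : ℝ) - 1 := by
      have hle : ∀ k ∈ Finset.univ, B w k ≤ (if k ∈ G ∨ k = w then (0:ℝ) else 1) := by
        intro k _
        by_cases hk : k ∈ G ∨ k = w
        · rcases hk with hk | hk
          · simp only [if_pos (Or.inl hk)]; exact le_of_eq (hBwG k hk)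
          · simp only [if_pos (Or.inr hk)]; rw [hk, hdiag w]
        · simp only [if_neg hk]; exact hB1 w k
      have hset : Finset.univ.filter (fun k => ¬(k ∈ G ∨ k = w)) = Finset.univ \ (G ∪ {w}) := by
        ext k; simp [not_or]; exact and_comm
      have hcardu : (G ∪ {w}).card = G.card + 1 := by
        rw [Finset.card_union_of_disjoint (by simp [hwG])]; simp
      have hsub : (G ∪ {w}).card ≤ n := by
        have := Finset.card_le_univ (G ∪ {w}); simpa using this
      calc ∑ k, B w k ≤ ∑ k, (if k ∈ G ∨ k = w then (0:ℝ) else 1) := Finset.sum_le_sum hle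
        _ = ((Finset.univ.filter (fun k => ¬(k ∈ G ∨ k = w))).card : ℝ) := by
            rw [Finset.sum_ite, Finset.sum_const, Finset.sum_const]; simp
        _ = ((n - (G.card + 1) : ℕ) : ℝ) := by
            rw [hset, Finset.card_sdiff_of_subset (Finset.subset_univ _), hcardu]
            simp
        _ = (n : ℝ) - (G.card : ℝ) - 1 := by
            rw [Nat.cast_sub (hcardu ▸ hsub)]; push_cast; ring
    -- degree bound at j0
    have hj0_bound : ∑ k, B j0 k ≤ (G.card : ℝ) - 1 := by
      have hle : ∀ k ∈ Finset.univ, B j0 k ≤ (if k ∈ G ∧ k ≠ j0 then (1:ℝ) else 0) := by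
        intro k _
        by_cases hk : k ∈ G ∧ k ≠ j0
        · simp only [if_pos hk]; exact hB1 j0 k
        · simp only [if_neg hk]
          push_neg at hk
          by_cases hkG : k ∈ G
          · rw [hk hkG, hdiag j0]
          · have hBz : B j0 k = 0 := by
              by_contra hB
              exact hkG ((hGmem k).mpr (hclose j0 rfl k hB))
            rw [hBz]
      calc ∑ k, B j0 k ≤ ∑ k, (if k ∈ G ∧ k ≠ j0 then (1:ℝ) else 0) := Finset.sum_le_sum hle
        _ = ((Finset.univ.filter (fun k => k ∈ G ∧ k ≠ j0)).card : ℝ) := by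
            rw [Finset.sum_ite, Finset.sum_const, Finset.sum_const]; simp
        _ = ((G.erase j0).card : ℝ) := by
            congr 2
            ext k; simp [Finset.mem_erase, and_comm]
        _ = (G.card : ℝ) - 1 := by
            rw [Finset.card_erase_of_mem hj0G, Nat.cast_sub hGcard_pos]; simp
    have h1 := hdeg w
    have h2 := hdeg j0
    have hn1 : (1:ℝ) ≤ (n:ℝ) := by exact_mod_cast hn
    linarith


/-- For a network without self-loops in which every node has degree exceeding `3n/4 − 1`,
every stable equilibrium (suitably normalized) is the all-in-phase state. -/
theorem dense_network_no_self_loops_globally_synchronizing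
    (n : ℕ) (hn : 1 ≤ n) (B : Fin n → Fin n → ℝ) (θ : Fin n → ℝ)
    (hsym : ∀ j k, B j k = B k j)
    (h01 : ∀ j k, B j k = 0 ∨ B j k = 1)
    (hdiag : ∀ j, B j j = 0)
    (hdeg : ∀ j, 3 * (n : ℝ) / 4 - 1 < ∑ k : Fin n, B j k)
    (heq : ∀ j, ∑ k : Fin n, B j k * Real.sin (θ k - θ j) = 0)
    (hstab : ∀ v : Fin n → ℝ,
      0 ≤ ∑ j : Fin n, ∑ k : Fin n,
            B j k * Real.cos (θ k - θ j) * (v j - v k) ^ 2)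
    (hsin0 : ∑ j : Fin n, Real.sin (θ j) = 0)
    (hcos0 : 0 ≤ ∑ j : Fin n, Real.cos (θ j)) :
    ∀ j k : Fin n, ∃ m : ℤ, θ j - θ k = 2 * Real.pi * m := by
  by_cases hpos : ∀ j, 0 < Real.cos (θ j)
  · exact kuramoto_sync_of_all_cos_pos n hn B θ hsym h01 hdiag hdeg heq hpos
  · push_neg at hpos
    obtain ⟨a, ha⟩ := hpos
    exact (kuramoto_no_bad_node n hn B θ hsym h01 hdiag hdeg heq hstab hsin0 hcos0 a ha).elim
end

section
/- Suppose the network has connectivity at least μ̃ with μ̃ ≥ 0.7495, and θ is a stable equilibrium with ρ₁ < 0.03166, where ρ₁ = (1/n)·∑_j cos(θ_j). Then ∑_{j=1}^{n}∑_{k=1}^{n} (1 − A j k)·(cos(θ_k − θ_j) − cos²(θ_k − θ_j)) ≤ −0.4989·n². -/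
/-- Auxiliary: double sum of products identity. -/
theorem sum_sum_aux (n : ℕ) (f g : Fin n → ℝ) :
    ∑ j : Fin n, ∑ k : Fin n, (f k * f j + g k * g j)
      = (∑ j : Fin n, f j) ^ 2 + (∑ j : Fin n, g j) ^ 2 := by
  simp only [Finset.sum_add_distrib, ← Finset.sum_mul, ← Finset.mul_sum]
  ring

/-- Auxiliary: double sum of a single product. -/
theorem sum_sum_mul (n : ℕ) (f : Fin n → ℝ) :
    ∑ j : Fin n, ∑ k : Fin n, f k * f j = (∑ j : Fin n, f j) ^ 2 := by
  simp only [← Finset.sum_mul, ← Finset.mul_sum]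
  ring

/-- If the network has connectivity at least `μ̃ ≥ 0.7495` and `θ` is a stable equilibrium
with `ρ₁ < 0.03166`, then
`∑_{j,k} (1 − A j k)(cos(θ_k−θ_j) − cos²(θ_k−θ_j)) ≤ −0.4989·n²`. -/
theorem stable_equilibrium_small_rho1_anti_sync_bound
    (n : ℕ) (hn : 1 ≤ n) (A : Fin n → Fin n → ℝ) (θ : Fin n → ℝ) (μ : ℝ)
    (hμ0 : (0.7495 : ℝ) ≤ μ) (hμ1 : μ ≤ 1)
    (hsym : ∀ j k, A j k = A k j)
    (h01 : ∀ j k, A j k = 0 ∨ A j k = 1)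
    (hdiag : ∀ j, A j j = 1)
    (hconn : ∀ j, μ * n ≤ ∑ k : Fin n, A j k)
    (heq : ∀ j, ∑ k : Fin n, A j k * Real.sin (θ k - θ j) = 0)
    (hstab : ∀ v : Fin n → ℝ,
      0 ≤ ∑ j : Fin n, ∑ k : Fin n,
            A j k * Real.cos (θ k - θ j) * (v j - v k) ^ 2)
    (hsin0 : ∑ j : Fin n, Real.sin (θ j) = 0)
    (ρ₁ : ℝ) (hρ₁ : ρ₁ = (1 / (n : ℝ)) * ∑ j : Fin n, Real.cos (θ j))
    (hρ₁nonneg : 0 ≤ ρ₁) (hρ₁small : ρ₁ < 0.03166) :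
    ∑ j : Fin n, ∑ k : Fin n,
        (1 - A j k) * (Real.cos (θ k - θ j) - Real.cos (θ k - θ j) ^ 2)
      ≤ -0.4989 * (n : ℝ) ^ 2 := by
  have hn0 : (0:ℝ) < (n:ℝ) := by exact_mod_cast hn
  have hcossum : ∑ j : Fin n, Real.cos (θ j) = (n:ℝ) * ρ₁ := by
    rw [hρ₁]; field_simp
  -- sum of cos of differences
  have hcos_sum : ∑ j : Fin n, ∑ k : Fin n, Real.cos (θ k - θ j)
      = (n:ℝ)^2 * ρ₁^2 := by
    have := sum_sum_aux n (fun j => Real.cos (θ j)) (fun j => Real.sin (θ j))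
    simp only [Real.cos_sub] at *
    rw [this, hcossum, hsin0]
    ring
  -- sum of cos² of differences is at least n²/2
  have hcos2_sum : (n:ℝ)^2 / 2 ≤ ∑ j : Fin n, ∑ k : Fin n, Real.cos (θ k - θ j) ^ 2 := by
    have hpt : ∀ j k : Fin n, Real.cos (θ k - θ j) ^ 2
        = 1/2 + (Real.cos (2*θ k) * Real.cos (2*θ j) + Real.sin (2*θ k) * Real.sin (2*θ j))/2 := by
      intro j k
      rw [Real.cos_sq, show 2*(θ k - θ j) = 2*θ k - 2*θ j from by ring, Real.cos_sub]
    have hS2 : ∑ j : Fin n, ∑ k : Fin n, Real.cos (θ k - θ j) ^ 2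
        = (n:ℝ)^2/2 + ((∑ j : Fin n, Real.cos (2*θ j))^2 + (∑ j : Fin n, Real.sin (2*θ j))^2)/2 := by
      calc ∑ j : Fin n, ∑ k : Fin n, Real.cos (θ k - θ j) ^ 2
          = ∑ j : Fin n, ∑ k : Fin n, (1/2 +
              (Real.cos (2*θ k) * Real.cos (2*θ j) + Real.sin (2*θ k) * Real.sin (2*θ j))/2) :=
            Finset.sum_congr rfl fun j _ => Finset.sum_congr rfl fun k _ => hpt j k
        _ = (n:ℝ)^2/2 + ((∑ j : Fin n, Real.cos (2*θ j))^2 + (∑ j : Fin n, Real.sin (2*θ j))^2)/2 := by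
            simp only [Finset.sum_add_distrib, ← Finset.sum_div]
            rw [sum_sum_mul n (fun j => Real.cos (2*θ j)), sum_sum_mul n (fun j => Real.sin (2*θ j))]
            simp only [Finset.sum_const, Finset.card_univ, Fintype.card_fin, nsmul_eq_mul]
            ring
    rw [hS2]
    nlinarith [sq_nonneg (∑ j : Fin n, Real.cos (2*θ j)), sq_nonneg (∑ j : Fin n, Real.sin (2*θ j))]
  -- stability gives ∑ A (c - c²) ≥ 0
  have hstab_sc : 0 ≤ ∑ j : Fin n, ∑ k : Fin n,
      A j k * (Real.cos (θ k - θ j) - Real.cos (θ k - θ j) ^ 2) := by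
    have h1 := hstab (fun j => Real.sin (θ j))
    have h2 := hstab (fun j => Real.cos (θ j))
    have hk : ∀ j k : Fin n,
        A j k * (Real.cos (θ k - θ j) - Real.cos (θ k - θ j) ^ 2)
        = (A j k * Real.cos (θ k - θ j) * (Real.sin (θ j) - Real.sin (θ k)) ^ 2
          + A j k * Real.cos (θ k - θ j) * (Real.cos (θ j) - Real.cos (θ k)) ^ 2) / 2 := by
      intro j k
      have hd : (Real.sin (θ j) - Real.sin (θ k))^2 + (Real.cos (θ j) - Real.cos (θ k))^2
          = 2 - 2*Real.cos (θ k - θ j) := by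
        rw [Real.cos_sub]
        linear_combination Real.sin_sq_add_cos_sq (θ j) + Real.sin_sq_add_cos_sq (θ k)
      linear_combination (-(A j k * Real.cos (θ k - θ j)) / 2) * hd
    simp only [hk, ← Finset.sum_div, Finset.sum_add_distrib]
    positivity
  -- combine
  have hsplit : ∑ j : Fin n, ∑ k : Fin n,
      (1 - A j k) * (Real.cos (θ k - θ j) - Real.cos (θ k - θ j) ^ 2)
      = (∑ j : Fin n, ∑ k : Fin n, Real.cos (θ k - θ j))
        - (∑ j : Fin n, ∑ k : Fin n, Real.cos (θ k - θ j) ^ 2)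
        - ∑ j : Fin n, ∑ k : Fin n,
            A j k * (Real.cos (θ k - θ j) - Real.cos (θ k - θ j) ^ 2) := by
    rw [← Finset.sum_sub_distrib, ← Finset.sum_sub_distrib]
    congr 1; ext j
    rw [← Finset.sum_sub_distrib, ← Finset.sum_sub_distrib]
    congr 1; ext k; ring
  rw [hsplit, hcos_sum]
  have hρsq : ρ₁^2 ≤ 0.00101 := by nlinarith
  have h4 : (n:ℝ)^2 * ρ₁^2 ≤ 0.00101 * (n:ℝ)^2 := by nlinarith [sq_nonneg ((n:ℝ))]
  linarith [hcos2_sum, hstab_sc, h4, sq_nonneg ((n:ℝ))]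
end
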